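/- Every equal norm Parseval frame {f_i}_{i=1}^{Kn} for an n-dimensional Hilbert space (K a positive integer) can be partitioned into K linearly independent spanning sets, each of cardinality exactly n. -/

import Mathlib

/-!
By the Rado–Horn theorem, `Kn` vectors split into `K` linearly independent sets as soon as every
subfamily `J` satisfies `|J| ≤ K · dim span J`. For an equal norm Parseval frame this holds: the
squared norms sum to `n`, so each equals `1/K`, while the squared norms of the frame vectors lying
in a subspace `W` sum to at most `dim W`. Each of the `K` independent sets has at most `n`
elements and together they have `Kn`, so each one is a basis.

Rado–Horn is proved in Rado's form with lists `C i` of admissible colours, by induction on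
`∑ |C i|`: if a list contains two colours `x ≠ y`, removing `x` or removing `y` from it preserves
the rank condition, because otherwise submodularity of the rank, applied to the two violating sets,
gives a contradiction.
-/

open Finset Module Submodule

section RadoHorn

variable {𝕜 V ι κ : Type*} [DivisionRing 𝕜] [AddCommGroup V] [Module 𝕜 V]

theorem finrank_image_mono (f : ι → V) {s t : Finset ι} (h : s ⊆ t) :
    (f '' s).finrank 𝕜 ≤ (f '' t).finrank 𝕜 :=
  have := FiniteDimensional.span_of_finite 𝕜 (t.finite_toSet.image f)
  Submodule.finrank_mono (span_mono (Set.image_mono (coe_subset.2 h)))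

theorem finrank_image_le_card (f : ι → V) (s : Finset ι) : (f '' s).finrank 𝕜 ≤ #s := by
  classical
  rw [← coe_image]
  exact (finrank_span_finset_le_card _).trans card_image_le

theorem finrank_image_union_add_finrank_image_inter_le [DecidableEq ι] (f : ι → V)
    (s t : Finset ι) :
    (f '' ↑(s ∪ t)).finrank 𝕜 + (f '' ↑(s ∩ t)).finrank 𝕜 ≤
      (f '' s).finrank 𝕜 + (f '' t).finrank 𝕜 := by
  have := FiniteDimensional.span_of_finite 𝕜 (s.finite_toSet.image f)
  have := FiniteDimensional.span_of_finite 𝕜 (t.finite_toSet.image f)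
  have hsup : span 𝕜 (f '' ↑(s ∪ t)) = span 𝕜 (f '' s) ⊔ span 𝕜 (f '' t) := by
    rw [coe_union, Set.image_union, span_union]
  have hinf : span 𝕜 (f '' ↑(s ∩ t)) ≤ span 𝕜 (f '' s) ⊓ span 𝕜 (f '' t) :=
    le_inf (span_mono (Set.image_mono (by simp))) (span_mono (Set.image_mono (by simp)))
  rw [Set.finrank, Set.finrank, Set.finrank, Set.finrank, hsup,
    ← finrank_sup_add_finrank_inf_eq (span 𝕜 (f '' s))]
  exact Nat.add_le_add_left (Submodule.finrank_mono hinf) _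

theorem linearIndepOn_of_card_le_finrank_image {f : ι → V} {s : Finset ι}
    (h : #s ≤ (f '' s).finrank 𝕜) : LinearIndepOn 𝕜 f (s : Set ι) := by
  rw [LinearIndepOn, linearIndependent_iff_card_le_finrank_span, ← Set.image_eq_range]
  simpa using h

variable [Fintype κ] [DecidableEq κ] {f : ι → V}

theorem card_filter_eq_finrank_of_linearIndepOn [Fintype ι] [FiniteDimensional 𝕜 V]
    {c : ι → κ} (hc : ∀ k, LinearIndepOn 𝕜 f {i | c i = k})
    (hcard : Fintype.card ι = Fintype.card κ * finrank 𝕜 V) (k : κ) :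
    #(univ.filter (c · = k)) = finrank 𝕜 V := by
  have h_le : ∀ k, #(univ.filter (c · = k)) ≤ finrank 𝕜 V := fun k ↦ by
    simpa [Fintype.card_subtype] using (hc k).fintype_card_le_finrank
  have h_sum : ∑ k, #(univ.filter (c · = k)) = ∑ _ : κ, finrank 𝕜 V := by
    rw [← card_eq_sum_card_fiberwise fun _ _ ↦ mem_univ _]
    simp [hcard]
  exact (sum_eq_sum_iff_of_le fun k _ ↦ h_le k).1 h_sum k (mem_univ k)

variable (𝕜) in
/-- The rank of `{(i, k) | i ∈ J, k ∈ C i}` in the direct sum, over the colours `k`, of copies of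
the linear matroid of `f`. -/
noncomputable def colorRank (f : ι → V) (C : ι → Finset κ) (J : Finset ι) : ℕ :=
  ∑ k, (f '' ↑(J.filter (k ∈ C ·))).finrank 𝕜

variable {C : ι → Finset κ}

theorem colorRank_le_sum_card (J : Finset ι) : colorRank 𝕜 f C J ≤ ∑ i ∈ J, #(C i) :=
  calc colorRank 𝕜 f C J ≤ ∑ k, #(J.filter (k ∈ C ·)) :=
        sum_le_sum fun k _ ↦ finrank_image_le_card f _
    _ = ∑ i ∈ J, #(C i) := by
        simp only [card_eq_sum_ones, sum_filter]
        rw [sum_comm]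
        simp

variable [DecidableEq ι]

theorem colorRank_update_of_notMem {e : ι} {J : Finset ι} (he : e ∉ J) (s : Finset κ) :
    colorRank 𝕜 f (Function.update C e s) J = colorRank 𝕜 f C J := by
  refine sum_congr rfl fun k _ ↦ ?_
  congr 3
  refine filter_congr fun i hi ↦ ?_
  rw [Function.update_of_ne (ne_of_mem_of_not_mem hi he)]

theorem colorRank_union_add_colorRank_inter_erase_le {e : ι} {x y : κ} (hxy : x ≠ y)
    {J₁ J₂ : Finset ι} (he₁ : e ∈ J₁) (he₂ : e ∈ J₂) :
    colorRank 𝕜 f C (J₁ ∪ J₂) + colorRank 𝕜 f C ((J₁ ∩ J₂).erase e) ≤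
      colorRank 𝕜 f (Function.update C e ((C e).erase x)) J₁ +
        colorRank 𝕜 f (Function.update C e ((C e).erase y)) J₂ := by
  simp only [colorRank, ← sum_add_distrib]
  refine sum_le_sum fun k _ ↦ ?_
  set A₁ := J₁.filter (k ∈ Function.update C e ((C e).erase x) ·)
  set A₂ := J₂.filter (k ∈ Function.update C e ((C e).erase y) ·)
  have h_union : (J₁ ∪ J₂).filter (k ∈ C ·) ⊆ A₁ ∪ A₂ := by
    intro i hi
    simp only [A₁, A₂, mem_union, mem_filter, Function.update_apply] at hi ⊢
    split_ifs with h
    · subst h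
      by_cases hk : k = x
      · exact Or.inr ⟨he₂, mem_erase.2 ⟨hk ▸ hxy, hi.2⟩⟩
      · exact Or.inl ⟨he₁, mem_erase.2 ⟨hk, hi.2⟩⟩
    · tauto
  have h_inter : ((J₁ ∩ J₂).erase e).filter (k ∈ C ·) ⊆ A₁ ∩ A₂ := by
    intro i hi
    simp only [A₁, A₂, mem_inter, mem_erase, mem_filter, Function.update_apply] at hi ⊢
    simp [hi.1.1, hi.1.2, hi.2]
  calc _ ≤ (f '' ↑(A₁ ∪ A₂)).finrank 𝕜 + (f '' ↑(A₁ ∩ A₂)).finrank 𝕜 :=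
        add_le_add (finrank_image_mono f h_union) (finrank_image_mono f h_inter)
    _ ≤ _ := finrank_image_union_add_finrank_image_inter_le f A₁ A₂

theorem card_le_colorRank_update_erase_or (hC : ∀ J, #J ≤ colorRank 𝕜 f C J) (e : ι)
    {x y : κ} (hxy : x ≠ y) :
    (∀ J, #J ≤ colorRank 𝕜 f (Function.update C e ((C e).erase x)) J) ∨
      ∀ J, #J ≤ colorRank 𝕜 f (Function.update C e ((C e).erase y)) J := by
  by_contra! ⟨⟨J₁, h₁⟩, ⟨J₂, h₂⟩⟩
  have he₁ : e ∈ J₁ := by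
    by_contra he
    rw [colorRank_update_of_notMem he] at h₁
    exact (hC J₁).not_gt h₁
  have he₂ : e ∈ J₂ := by
    by_contra he
    rw [colorRank_update_of_notMem he] at h₂
    exact (hC J₂).not_gt h₂
  have h_submod :=
    colorRank_union_add_colorRank_inter_erase_le (𝕜 := 𝕜) (f := f) (C := C) hxy he₁ he₂
  have h_union := hC (J₁ ∪ J₂)
  have h_inter := hC ((J₁ ∩ J₂).erase e)
  have h_card := card_union_add_card_inter J₁ J₂
  have h_erase := card_erase_of_mem (mem_inter.2 ⟨he₁, he₂⟩)
  have h_pos := card_pos.2 ⟨e, mem_inter.2 ⟨he₁, he₂⟩⟩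
  omega

theorem exists_coloring_linearIndepOn_of_card_le_colorRank [Fintype ι]
    (hC : ∀ J, #J ≤ colorRank 𝕜 f C J) :
    ∃ c : ι → κ, (∀ i, c i ∈ C i) ∧ ∀ k, LinearIndepOn 𝕜 f {i | c i = k} := by
  induction hN : ∑ i, #(C i) using Nat.strong_induction_on generalizing C with
  | _ N ih =>
  by_cases h_multi : ∃ e, 1 < #(C e)
  · obtain ⟨e, he⟩ := h_multi
    obtain ⟨x, hx, y, hy, hxy⟩ := one_lt_card.1 he
    have h_shrink : ∀ z ∈ C e,
        (∀ J, #J ≤ colorRank 𝕜 f (Function.update C e ((C e).erase z)) J) →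
          ∃ c : ι → κ, (∀ i, c i ∈ C i) ∧ ∀ k, LinearIndepOn 𝕜 f {i | c i = k} := by
      intro z hz hCz
      have h_le : Function.update C e ((C e).erase z) ≤ C :=
        update_le_self_iff.2 (erase_subset z (C e))
      have h_lt : ∑ i, #(Function.update C e ((C e).erase z) i) < N :=
        hN ▸ sum_lt_sum (fun i _ ↦ card_le_card (h_le i))
          ⟨e, mem_univ e, by simpa using card_erase_lt_of_mem hz⟩
      obtain ⟨c, hc, hc_indep⟩ := ih _ h_lt hCz rfl
      exact ⟨c, fun i ↦ h_le i (hc i), hc_indep⟩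
    rcases card_le_colorRank_update_erase_or hC e hxy with h | h
    exacts [h_shrink x hx h, h_shrink y hy h]
  · push Not at h_multi
    have h_single : ∀ i, #(C i) = 1 := fun i ↦
      le_antisymm (h_multi i) (by simpa using (hC {i}).trans (colorRank_le_sum_card {i}))
    choose c hc using fun i ↦ card_eq_one.1 (h_single i)
    refine ⟨c, fun i ↦ by simp [hc i], fun k ↦ ?_⟩
    have h_fiber : colorRank 𝕜 f C (univ.filter (c · = k)) =
        (f '' ↑(univ.filter (c · = k))).finrank 𝕜 := by
      rw [colorRank, sum_eq_single k]
      · congr 3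
        exact filter_true_of_mem fun i hi ↦ by simp_all
      · intro k' _ hk'
        rw [filter_false_of_mem fun i hi ↦ by simp_all [eq_comm]]
        simp
      · simp
    simpa using linearIndepOn_of_card_le_finrank_image ((hC _).trans h_fiber.le)

theorem exists_linearIndepOn_fibers_of_card_le_mul_finrank [Fintype ι]
    (hf : ∀ J : Finset ι, #J ≤ Fintype.card κ * (f '' J).finrank 𝕜) :
    ∃ c : ι → κ, ∀ k, LinearIndepOn 𝕜 f {i | c i = k} := by
  obtain ⟨c, -, hc⟩ := exists_coloring_linearIndepOn_of_card_le_colorRank (C := fun _ ↦ univ)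
    fun J ↦ by simpa [colorRank] using hf J
  exact ⟨c, hc⟩

end RadoHorn

section ParsevalFrame

variable {𝕜 E ι : Type*} [RCLike 𝕜] [NormedAddCommGroup E] [InnerProductSpace 𝕜 E] [Fintype ι]

variable (𝕜) in
def IsParsevalFrame (f : ι → E) : Prop :=
  ∀ x : E, ∑ i, ‖(inner 𝕜 (f i) x : 𝕜)‖ ^ 2 = ‖x‖ ^ 2

namespace IsParsevalFrame

variable {f : ι → E}

theorem sum_sum_norm_inner_sq_eq_card (hf : IsParsevalFrame 𝕜 f) {κ : Type*} [Fintype κ]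
    {v : κ → E} (hv : Orthonormal 𝕜 v) :
    ∑ i, ∑ a, ‖(inner 𝕜 (f i) (v a) : 𝕜)‖ ^ 2 = Fintype.card κ := by
  rw [sum_comm]
  simp [hf _, hv.1]

theorem span_range_eq_top (hf : IsParsevalFrame 𝕜 f) : span 𝕜 (Set.range f) = ⊤ := by
  have := FiniteDimensional.span_of_finite 𝕜 (Set.finite_range f)
  refine (orthogonal_eq_bot_iff).1 (eq_bot_iff.2 fun x hx ↦ ?_)
  have h_inner : ∀ i, (inner 𝕜 (f i) x : 𝕜) = 0 := fun i ↦
    (mem_orthogonal _ x).1 hx (f i) (subset_span ⟨i, rfl⟩)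
  simpa [h_inner] using (hf x).symm

theorem finiteDimensional (hf : IsParsevalFrame 𝕜 f) : FiniteDimensional 𝕜 E :=
  Module.finite_def.2 (hf.span_range_eq_top ▸ fg_span (Set.finite_range f))

theorem sum_norm_sq_eq_finrank [FiniteDimensional 𝕜 E] (hf : IsParsevalFrame 𝕜 f) :
    ∑ i, ‖f i‖ ^ 2 = finrank 𝕜 E := by
  let b := stdOrthonormalBasis 𝕜 E
  simp_rw [← b.sum_sq_norm_inner_left (f _)]
  rw [hf.sum_sum_norm_inner_sq_eq_card b.orthonormal, Fintype.card_fin]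

theorem sum_norm_sq_le_finrank_image (hf : IsParsevalFrame 𝕜 f) (J : Finset ι) :
    ∑ i ∈ J, ‖f i‖ ^ 2 ≤ (f '' J).finrank 𝕜 := by
  let W := span 𝕜 (f '' J)
  have := FiniteDimensional.span_of_finite 𝕜 (J.finite_toSet.image f)
  let b := stdOrthonormalBasis 𝕜 W
  have hb : Orthonormal 𝕜 fun a ↦ (b a : E) := b.orthonormal.comp_linearIsometry W.subtypeₗᵢ
  have h_mem : ∀ i ∈ J, ‖f i‖ ^ 2 = ∑ a, ‖(inner 𝕜 (f i) (b a : E) : 𝕜)‖ ^ 2 := fun i hi ↦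
    (b.sum_sq_norm_inner_left ⟨f i, subset_span (Set.mem_image_of_mem f hi)⟩).symm
  calc ∑ i ∈ J, ‖f i‖ ^ 2 = ∑ i ∈ J, ∑ a, ‖(inner 𝕜 (f i) (b a : E) : 𝕜)‖ ^ 2 :=
        sum_congr rfl h_mem
    _ ≤ ∑ i, ∑ a, ‖(inner 𝕜 (f i) (b a : E) : 𝕜)‖ ^ 2 :=
      sum_le_sum_of_subset_of_nonneg (subset_univ J) fun _ _ _ ↦ by positivity
    _ = (f '' J).finrank 𝕜 := by
      rw [hf.sum_sum_norm_inner_sq_eq_card hb, Fintype.card_fin, Set.finrank]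

theorem card_le_mul_finrank_image [FiniteDimensional 𝕜 E] (hf : IsParsevalFrame 𝕜 f)
    (hequal : ∀ i j, ‖f i‖ = ‖f j‖) {K : ℕ} (hcard : Fintype.card ι = K * finrank 𝕜 E)
    (J : Finset ι) :
    #J ≤ K * (f '' J).finrank 𝕜 := by
  obtain rfl | ⟨i₀, -⟩ := J.eq_empty_or_nonempty
  · simp
  have h_const : ∀ i, ‖f i‖ ^ 2 = ‖f i₀‖ ^ 2 := fun i ↦ by rw [hequal i i₀]
  have h_total := hf.sum_norm_sq_eq_finrank
  have h_J := hf.sum_norm_sq_le_finrank_image J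
  simp only [h_const, sum_const, nsmul_eq_mul, card_univ, hcard] at h_total h_J
  have h_dim : (0 : ℝ) < finrank 𝕜 E := by
    have : 0 < Fintype.card ι := Fintype.card_pos_iff.2 ⟨i₀⟩
    rw [hcard] at this
    exact_mod_cast Nat.pos_of_mul_pos_left this
  have h_unit : (K : ℝ) * ‖f i₀‖ ^ 2 = 1 := by
    apply mul_right_cancel₀ h_dim.ne'
    push_cast at h_total
    linear_combination h_total
  have : (#J : ℝ) ≤ K * (f '' J).finrank 𝕜 :=
    calc (#J : ℝ) = K * (#J * ‖f i₀‖ ^ 2) := by linear_combination (-(#J : ℝ)) * h_unit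
      _ ≤ K * (f '' J).finrank 𝕜 := by gcongr
  exact_mod_cast this

end IsParsevalFrame

end ParsevalFrame

theorem equal_norm_parseval_partition_general
    {H : Type*} [NormedAddCommGroup H] [InnerProductSpace ℂ H]
    (n K : ℕ) (hdim : Module.finrank ℂ H = n)
    (f : Fin (K * n) → H)
    (hparseval : ∀ x : H, ∑ i, ‖(inner ℂ (f i) x : ℂ)‖ ^ 2 = ‖x‖ ^ 2)
    (hequal : ∀ i j, ‖f i‖ = ‖f j‖) :
    ∃ part : Fin K → Finset (Fin (K * n)),
      (∀ j k, j ≠ k → Disjoint (part j) (part k)) ∧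
      Finset.univ.biUnion part = Finset.univ ∧
      ∀ j, LinearIndependent ℂ (fun i : (part j : Set (Fin (K * n))) => f i) ∧
        Submodule.span ℂ (f '' (part j : Set (Fin (K * n)))) = ⊤ ∧
        (part j).card = n := by
  have hframe : IsParsevalFrame ℂ f := hparseval
  have := hframe.finiteDimensional
  have hcard : Fintype.card (Fin (K * n)) = Fintype.card (Fin K) * finrank ℂ H := by
    simp [hdim]
  obtain ⟨c, hc⟩ := exists_linearIndepOn_fibers_of_card_le_mul_finrank
    (hframe.card_le_mul_finrank_image hequal hcard)
  refine ⟨fun j ↦ univ.filter (c · = j), fun j k hjk ↦ disjoint_filter.2 fun i _ hj hk ↦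
    hjk (hj.symm.trans hk), by ext; simp, fun j ↦ ?_⟩
  have h_indep : LinearIndepOn ℂ f ↑(univ.filter (c · = j)) := by simpa using hc j
  have h_card := card_filter_eq_finrank_of_linearIndepOn hc hcard j
  refine ⟨h_indep, ?_, h_card.trans hdim⟩
  rw [Set.image_eq_range]
  exact h_indep.linearIndependent.span_eq_top_of_card_eq_finrank' (by simpa using h_card)

theorem equal_norm_parseval_partition
    {H : Type*} [NormedAddCommGroup H] [InnerProductSpace ℂ H]
    (n K : ℕ) (hK : 0 < K) (hdim : Module.finrank ℂ H = n)
    (f : Fin (K * n) → H)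
    (hparseval : ∀ x : H, ∑ i, ‖(inner ℂ (f i) x : ℂ)‖ ^ 2 = ‖x‖ ^ 2)
    (hequal : ∀ i j, ‖f i‖ = ‖f j‖) :
    ∃ part : Fin K → Finset (Fin (K * n)),
      (∀ j k, j ≠ k → Disjoint (part j) (part k)) ∧
      Finset.univ.biUnion part = Finset.univ ∧
      ∀ j, LinearIndependent ℂ (fun i : (part j : Set (Fin (K * n))) => f i) ∧
        Submodule.span ℂ (f '' (part j : Set (Fin (K * n)))) = ⊤ ∧
        (part j).card = n :=
  equal_norm_parseval_partition_general n K hdim f hparseval hequal
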